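/- Let D₁ and D₂ be cDGs containing all loops with the same directed part. Then D₁ and D₂ are Markov equivalent if and only if for every ancestral set A⊆V, the induced subgraphs (D₁)_A and (D₂)_A have the same collider connections (i.e., for all α,β∈A, α and β are collider connected in (D₁)_A iff in (D₂)_A). -/
import Mathlib


universe u

/-- A directed correlation graph (cDG): directed edges (loops allowed) and
blunt edges (symmetric, no loops). -/
structure CDG (V : Type u) where
  dir : V → V → Prop
  blunt : V → V → Prop
  blunt_symm : ∀ a b, blunt a b → blunt b a
  blunt_irrefl : ∀ a, ¬ blunt a a

namespace CDG

variable {V : Type u}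

/-- `anc D a b` : `a` is an ancestor of `b` (directed path from `a` to `b`;
every node is its own ancestor). -/
def anc (D : CDG V) (a b : V) : Prop := Relation.ReflTransGen D.dir a b

/-- `an(C)`: the set of ancestors of `C`. -/
def ancSet (D : CDG V) (C : Set V) : Set V := {a | ∃ c ∈ C, D.anc a c}

/-- An edge instance between `a` and `b`, with its orientation. -/
inductive Edge (D : CDG V) : V → V → Type u
  | fwd {a b : V} : D.dir a b → Edge D a b
  | bwd {a b : V} : D.dir b a → Edge D a b
  | bl  {a b : V} : D.blunt a b → Edge D a b

/-- The edge has a neck (head or stump) at its left endpoint. -/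
def Edge.neckLeft {D : CDG V} {a b : V} : D.Edge a b → Prop
  | .fwd _ => False
  | .bwd _ => True
  | .bl _ => True

/-- The edge has a neck (head or stump) at its right endpoint. -/
def Edge.neckRight {D : CDG V} {a b : V} : D.Edge a b → Prop
  | .fwd _ => True
  | .bwd _ => False
  | .bl _ => True

/-- The edge has a head (arrowhead) at its right endpoint. -/
def Edge.headRight {D : CDG V} {a b : V} : D.Edge a b → Prop
  | .fwd _ => True
  | _ => False

/-- The edge is a blunt edge. -/
def Edge.isBlunt {D : CDG V} {a b : V} : D.Edge a b → Prop
  | .bl _ => True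
  | _ => False

/-- A walk from `a` to `b` in `D`. -/
inductive Walk (D : CDG V) : V → V → Type u
  | nil (a : V) : Walk D a a
  | cons {a m c : V} : D.Edge a m → Walk D m c → Walk D a c

namespace Walk

variable {D : CDG V}

def length : ∀ {a b : V}, D.Walk a b → ℕ
  | _, _, .nil _ => 0
  | _, _, .cons _ w => w.length + 1

def support : ∀ {a b : V}, D.Walk a b → List V
  | a, _, .nil _ => [a]
  | a, _, .cons _ w => a :: w.support

/-- The list of nonendpoint (internal) node instances of a walk. -/
def internal : ∀ {a b : V}, D.Walk a b → List V
  | _, _, .nil _ => []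
  | _, _, .cons _ (.nil _) => []
  | _, _, .cons (m := m) _ w => m :: w.internal

/-- The final edge of the walk has a head at the terminal node. -/
def lastHead : ∀ {a b : V}, D.Walk a b → Prop
  | _, _, .nil _ => False
  | _, _, .cons e (.nil _) => e.headRight
  | _, _, .cons _ w => w.lastHead

/-- Every collider on the walk is in `an(C)` and no noncollider is in `C`. -/
def mOpen (C : Set V) : ∀ {a b : V}, D.Walk a b → Prop
  | _, _, .nil _ => True
  | _, _, .cons _ (.nil _) => True
  | _, _, .cons (m := m) e₁ (.cons e₂ w) =>
      ((e₁.neckRight ∧ e₂.neckLeft) → m ∈ D.ancSet C) ∧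
      (¬ (e₁.neckRight ∧ e₂.neckLeft) → m ∉ C) ∧
      mOpen C (Walk.cons e₂ w)

/-- Every nonendpoint node of the walk is a collider. -/
def allColliders : ∀ {a b : V}, D.Walk a b → Prop
  | _, _, .nil _ => True
  | _, _, .cons _ (.nil _) => True
  | _, _, .cons e₁ (.cons e₂ w) =>
      e₁.neckRight ∧ e₂.neckLeft ∧ allColliders (Walk.cons e₂ w)

/-- Every edge of the walk is blunt. -/
def allBlunt : ∀ {a b : V}, D.Walk a b → Prop
  | _, _, .nil _ => True
  | _, _, .cons e w => e.isBlunt ∧ w.allBlunt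

end Walk

/-- There is a μ-connecting walk from `a` to `b` given `C`. -/
def muConn (D : CDG V) (C : Set V) (a b : V) : Prop :=
  a ∉ C ∧ ∃ w : D.Walk a b, w.mOpen C ∧ w.lastHead

/-- `B` is μ-separated from `A` given `C`. -/
def muSep (D : CDG V) (A B C : Set V) : Prop :=
  ∀ a ∈ A, ∀ b ∈ B, ¬ D.muConn C a b

/-- The independence model of `D`: all μ-separation triples. -/
def indep (D : CDG V) : Set (Set V × Set V × Set V) :=
  {p | D.muSep p.1 p.2.1 p.2.2}

/-- A (nontrivial) collider path. -/
def IsColliderPath {D : CDG V} {a b : V} (w : D.Walk a b) : Prop :=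
  0 < w.length ∧ w.support.Nodup ∧ w.allColliders

/-- `a` and `b` are collider connected: some nontrivial walk between them has
every nonendpoint node a collider. -/
def colliderConn (D : CDG V) (a b : V) : Prop :=
  ∃ w : D.Walk a b, 0 < w.length ∧ w.allColliders

/-- A weak inducing path from `a` to `b`: a collider path whose nonendpoint
nodes are all ancestors of `a` or of `b`. -/
def WeakInducing (D : CDG V) (a b : V) : Prop :=
  ∃ w : D.Walk a b, IsColliderPath w ∧ ∀ m ∈ w.internal, D.anc m a ∨ D.anc m b

/-- A weak inducing path between `a` and `b` (in either direction). -/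
def WeakInducingBetween (D : CDG V) (a b : V) : Prop :=
  D.WeakInducing a b ∨ D.WeakInducing b a

end CDG

/-- The induced subgraph of `D` on the node set `A`. -/
def CDG.induce {V : Type} (D : CDG V) (A : Set V) : CDG V where
  dir a b := D.dir a b ∧ a ∈ A ∧ b ∈ A
  blunt a b := D.blunt a b ∧ a ∈ A ∧ b ∈ A
  blunt_symm := fun _ _ h => ⟨D.blunt_symm _ _ h.1, h.2.2, h.2.1⟩
  blunt_irrefl := fun a h => D.blunt_irrefl a h.1

/-- A set is ancestral if it contains all of its ancestors. -/
def CDG.IsAncestral {V : Type} (D : CDG V) (A : Set V) : Prop := D.ancSet A ⊆ A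

/- ===================== Auxiliary development ===================== -/

namespace CDG

variable {V : Type u} {D : CDG V}

namespace Walk

def append : ∀ {a m b : V}, D.Walk a m → D.Walk m b → D.Walk a b
  | _, _, _, .nil _, v => v
  | _, _, _, .cons e u, v => .cons e (u.append v)

def appendOne : ∀ {a m y : V}, D.Walk a m → D.Edge m y → D.Walk a y
  | _, _, _, .nil _, e => .cons e (.nil _)
  | _, _, _, .cons f w, e => .cons f (w.appendOne e)

/-- The first edge has a neck at its left endpoint (`True` for `nil`). -/
def fnl : ∀ {a b : V}, D.Walk a b → Prop
  | _, _, .nil _ => True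
  | _, _, .cons e _ => e.neckLeft

/-- Generalized internal-node condition: `P m s` holds for every internal
node `m` with collider-status proposition `s`. -/
def IntC (P : V → Prop → Prop) : ∀ {a b : V}, D.Walk a b → Prop
  | _, _, .nil _ => True
  | _, _, .cons _ (.nil _) => True
  | _, _, .cons (m := m) e₁ (.cons e₂ w) =>
      P m (e₁.neckRight ∧ e₂.neckLeft) ∧ IntC P (Walk.cons e₂ w)

@[simp] lemma length_append : ∀ {a m b : V} (u : D.Walk a m) (v : D.Walk m b),
    (u.append v).length = u.length + v.length
  | _, _, _, .nil _, v => by simp [append, length]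
  | _, _, _, .cons e u, v => by
      simp [append, length, length_append u v]; omega

@[simp] lemma length_appendOne : ∀ {a m y : V} (u : D.Walk a m) (e : D.Edge m y),
    (u.appendOne e).length = u.length + 1
  | _, _, _, .nil _, e => by simp [appendOne, length]
  | _, _, _, .cons f u, e => by simp [appendOne, length, length_appendOne u e]

lemma length_pos_of_lastHead : ∀ {a b : V} (w : D.Walk a b), w.lastHead → 1 ≤ w.length
  | _, _, .nil _, h => h.elim
  | _, _, .cons _ _, _ => by simp [length]

lemma length_pos_of_ne {a b : V} (w : D.Walk a b) (h : a ≠ b) : 1 ≤ w.length := by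
  cases w with
  | nil => exact absurd rfl h
  | cons e w => simp [length]

lemma lastHead_cons {a m b : V} (e : D.Edge a m) (w : D.Walk m b) (h : 1 ≤ w.length) :
    (Walk.cons e w).lastHead ↔ w.lastHead := by
  cases w with
  | nil => simp [length] at h
  | cons f w' => exact Iff.rfl

lemma lastHead_append : ∀ {a m b : V} (u : D.Walk a m) (v : D.Walk m b),
    1 ≤ v.length → ((u.append v).lastHead ↔ v.lastHead)
  | _, _, _, .nil _, v, _ => Iff.rfl
  | _, _, _, .cons e u, v, hv => by
      have h1 : 1 ≤ (u.append v).length := by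
        rw [length_append]; omega
      rw [show (Walk.cons e u).append v = Walk.cons e (u.append v) from rfl,
        lastHead_cons _ _ h1]
      exact lastHead_append u v hv

lemma lastHead_appendOne : ∀ {a m y : V} (u : D.Walk a m) (e : D.Edge m y),
    (u.appendOne e).lastHead ↔ e.headRight
  | _, _, _, .nil _, e => Iff.rfl
  | _, _, _, .cons f u, e => by
      have h1 : 1 ≤ (u.appendOne e).length := by rw [length_appendOne]; omega
      rw [show (Walk.cons f u).appendOne e = Walk.cons f (u.appendOne e) from rfl,
        lastHead_cons _ _ h1]
      exact lastHead_appendOne u e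

lemma fnl_appendOne : ∀ {a m y : V} (u : D.Walk a m) (e : D.Edge m y), 1 ≤ u.length →
    ((u.appendOne e).fnl ↔ u.fnl)
  | _, _, _, .nil _, e, h => by simp [length] at h
  | _, _, _, .cons f u, e, _ => Iff.rfl

lemma IntC_cons₂ {P : V → Prop → Prop} {a m b : V} (e : D.Edge a m) (w : D.Walk m b)
    (h : 1 ≤ w.length) :
    (Walk.cons e w).IntC P ↔ P m (e.neckRight ∧ w.fnl) ∧ w.IntC P := by
  cases w with
  | nil => simp [length] at h
  | cons f w' => exact Iff.rfl

lemma IntC_mono {P Q : V → Prop → Prop} (hPQ : ∀ m c, P m c → Q m c) :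
    ∀ {a b : V} (w : D.Walk a b), w.IntC P → w.IntC Q
  | _, _, .nil _, _ => trivial
  | _, _, .cons _ (.nil _), _ => trivial
  | _, _, .cons e₁ (.cons e₂ w), h =>
      ⟨hPQ _ _ h.1, IntC_mono hPQ (Walk.cons e₂ w) h.2⟩

lemma IntC_and {P Q : V → Prop → Prop} :
    ∀ {a b : V} (w : D.Walk a b), w.IntC P → w.IntC Q → w.IntC (fun m c => P m c ∧ Q m c)
  | _, _, .nil _, _, _ => trivial
  | _, _, .cons _ (.nil _), _, _ => trivial
  | _, _, .cons e₁ (.cons e₂ w), hP, hQ =>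
      ⟨⟨hP.1, hQ.1⟩, IntC_and (Walk.cons e₂ w) hP.2 hQ.2⟩

lemma mOpen_iff_IntC {C : Set V} : ∀ {a b : V} (w : D.Walk a b),
    w.mOpen C ↔ w.IntC (fun m c => (c → m ∈ D.ancSet C) ∧ (¬ c → m ∉ C))
  | _, _, .nil _ => Iff.rfl
  | _, _, .cons _ (.nil _) => Iff.rfl
  | _, _, .cons e₁ (.cons e₂ w) => by
      rw [show (Walk.cons e₁ (Walk.cons e₂ w)).mOpen C =
        (((e₁.neckRight ∧ e₂.neckLeft) → _ ∈ D.ancSet C) ∧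
         (¬ (e₁.neckRight ∧ e₂.neckLeft) → _ ∉ C) ∧ (Walk.cons e₂ w).mOpen C) from rfl]
      rw [mOpen_iff_IntC (Walk.cons e₂ w)]
      exact ⟨fun ⟨x, y, z⟩ => ⟨⟨x, y⟩, z⟩, fun ⟨⟨x, y⟩, z⟩ => ⟨x, y, z⟩⟩

lemma allColliders_iff_IntC : ∀ {a b : V} (w : D.Walk a b),
    w.allColliders ↔ w.IntC (fun _ c => c)
  | _, _, .nil _ => Iff.rfl
  | _, _, .cons _ (.nil _) => Iff.rfl
  | _, _, .cons e₁ (.cons e₂ w) => by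
      rw [show (Walk.cons e₁ (Walk.cons e₂ w)).allColliders =
        (e₁.neckRight ∧ e₂.neckLeft ∧ (Walk.cons e₂ w).allColliders) from rfl]
      rw [allColliders_iff_IntC (Walk.cons e₂ w)]
      exact ⟨fun ⟨x, y, z⟩ => ⟨⟨x, y⟩, z⟩, fun ⟨⟨x, y⟩, z⟩ => ⟨x, y, z⟩⟩

lemma start_mem_support : ∀ {a b : V} (w : D.Walk a b), a ∈ w.support
  | _, _, .nil _ => by simp [support]
  | _, _, .cons _ _ => by simp [support]

lemma IntC_of_support {A : Set V} : ∀ {a b : V} (w : D.Walk a b),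
    (∀ v ∈ w.support, v ∈ A) → w.IntC (fun m _ => m ∈ A)
  | _, _, .nil _, _ => trivial
  | _, _, .cons _ (.nil _), _ => trivial
  | _, _, .cons (m := m) e₁ (.cons e₂ w), h => by
      refine ⟨h m ?_, IntC_of_support (Walk.cons e₂ w) fun v hv => h v ?_⟩
      · exact by simp [support, start_mem_support]
      · exact by simp [support]; right; simpa [support] using hv

lemma support_of_IntC {A : Set V} : ∀ {a b : V} (w : D.Walk a b),
    a ∈ A → b ∈ A → w.IntC (fun m _ => m ∈ A) → ∀ v ∈ w.support, v ∈ A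
  | _, _, .nil _, ha, _, _ => by
      intro v hv; simp [support] at hv; exact hv ▸ ha
  | _, _, .cons _ (.nil _), ha, hb, _ => by
      intro v hv; simp [support] at hv
      rcases hv with rfl | rfl <;> assumption
  | _, _, .cons e₁ (.cons e₂ w), ha, hb, h => by
      intro v hv
      simp [support] at hv
      rcases hv with rfl | hv
      · exact ha
      · exact support_of_IntC (Walk.cons e₂ w) h.1 hb h.2 v (by simpa [support] using hv)

end Walk

end CDG

namespace CDG

variable {V : Type u} {D : CDG V}

lemma mem_ancSet_self {C : Set V} {c : V} (h : c ∈ C) : c ∈ D.ancSet C :=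
  ⟨c, h, Relation.ReflTransGen.refl⟩

lemma anc_trans {a b c : V} (h1 : D.anc a b) (h2 : D.anc b c) : D.anc a c :=
  Relation.ReflTransGen.trans h1 h2

lemma ancSet_trans {C : Set V} {x m : V} (hxm : D.anc x m) (hm : m ∈ D.ancSet C) :
    x ∈ D.ancSet C := by
  obtain ⟨c, hc, h⟩ := hm
  exact ⟨c, hc, anc_trans hxm h⟩

lemma ancSet_le {S T : Set V} (h : ∀ s ∈ S, s ∈ D.ancSet T) :
    ∀ v ∈ D.ancSet S, v ∈ D.ancSet T := by
  rintro v ⟨s, hs, hv⟩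
  exact ancSet_trans hv (h s hs)

lemma ancSet_ancSet {S : Set V} : ∀ v ∈ D.ancSet (D.ancSet S), v ∈ D.ancSet S :=
  ancSet_le (fun _ hs => hs)

namespace Walk

lemma IntC_append {P : V → Prop → Prop} :
    ∀ {a m b : V} (u : D.Walk a m) (v : D.Walk m b),
      u.IntC P → v.IntC P → (∀ c : Prop, P m c) → (u.append v).IntC P
  | _, _, _, .nil _, v, _, hv, _ => hv
  | _, _, _, .cons e (.nil _), v, _, hv, hm => by
      cases v with
      | nil => exact trivial
      | cons f v' => exact ⟨hm _, hv⟩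
  | _, _, _, .cons e (.cons f u'), v, hu, hv, hm =>
      ⟨hu.1, IntC_append (Walk.cons f u') v hu.2 hv hm⟩

lemma IntC_appendOne {P : V → Prop → Prop} :
    ∀ {a m y : V} (u : D.Walk a m) (e : D.Edge m y),
      u.IntC P → (∀ c : Prop, (c → e.neckLeft) → P m c) → (u.appendOne e).IntC P
  | _, _, _, .nil _, e, _, _ => trivial
  | _, _, _, .cons f (.nil _), e, _, hm => ⟨hm _ (fun h => h.2), trivial⟩
  | _, _, _, .cons f (.cons g u'), e, hu, hm =>
      ⟨hu.1, IntC_appendOne (Walk.cons g u') e hu.2 hm⟩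

lemma splitFirst (P Bad : V → Prop → Prop) :
    ∀ {x b : V} (w : D.Walk x b), w.IntC P →
    w.IntC (fun m c => P m c ∧ ¬ Bad m c) ∨
    ∃ (m : V) (u : D.Walk x m) (v : D.Walk m b),
      u.IntC (fun m c => P m c ∧ ¬ Bad m c) ∧ v.IntC P ∧
      1 ≤ u.length ∧ 1 ≤ v.length ∧ u.length + v.length = w.length ∧
      (v.lastHead ↔ w.lastHead) ∧ (u.fnl ↔ w.fnl) ∧ (∃ c : Prop, P m c ∧ Bad m c)
  | _, _, .nil _, _ => Or.inl trivial
  | _, _, .cons _ (.nil _), _ => Or.inl trivial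
  | x, b, .cons (m := m) e₁ (.cons (m := m₂) e₂ w'), h => by
      by_cases hb : Bad m (e₁.neckRight ∧ e₂.neckLeft)
      · refine Or.inr ⟨m, Walk.cons e₁ (Walk.nil m), Walk.cons e₂ w', trivial, h.2,
          ?_, ?_, ?_, Iff.rfl, Iff.rfl, ⟨_, h.1, hb⟩⟩
        · simp [length]
        · simp [length]
        · simp [length]; omega
      · rcases splitFirst P Bad (Walk.cons e₂ w') h.2 with ih | ⟨m', u', v', hu', hv',
          lu, lv, lsum, lhiff, fnliff, hj⟩
        · exact Or.inl ⟨⟨h.1, hb⟩, ih⟩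
        · refine Or.inr ⟨m', Walk.cons e₁ u', v', ?_, hv', ?_, lv, ?_, lhiff, Iff.rfl, hj⟩
          · rw [IntC_cons₂ e₁ u' lu]
            have hc : (e₁.neckRight ∧ u'.fnl) = (e₁.neckRight ∧ e₂.neckLeft) :=
              propext (and_congr Iff.rfl fnliff)
            rw [hc]
            exact ⟨⟨h.1, hb⟩, hu'⟩
          · simp [length]
          · simp [length] at lsum ⊢; omega

lemma splitLast (P Bad : V → Prop → Prop) :
    ∀ {x b : V} (w : D.Walk x b), w.IntC P →
    w.IntC (fun m c => P m c ∧ ¬ Bad m c) ∨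
    ∃ (m : V) (u : D.Walk x m) (v : D.Walk m b),
      u.IntC P ∧ v.IntC (fun m c => P m c ∧ ¬ Bad m c) ∧
      1 ≤ v.length ∧ (v.lastHead ↔ w.lastHead) ∧ (u.fnl ↔ w.fnl) ∧
      (∃ c : Prop, P m c ∧ Bad m c)
  | _, _, .nil _, _ => Or.inl trivial
  | _, _, .cons _ (.nil _), _ => Or.inl trivial
  | x, b, .cons (m := m) e₁ (.cons (m := m₂) e₂ w'), h => by
      rcases splitLast P Bad (Walk.cons e₂ w') h.2 with ih | ⟨m', u', v', hu', hv',
          lv, lhiff, fnliff, hj⟩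
      · by_cases hb : Bad m (e₁.neckRight ∧ e₂.neckLeft)
        · exact Or.inr ⟨m, Walk.cons e₁ (Walk.nil m), Walk.cons e₂ w', trivial, ih,
            by simp [length], Iff.rfl, Iff.rfl, ⟨_, h.1, hb⟩⟩
        · exact Or.inl ⟨⟨h.1, hb⟩, ih⟩
      · refine Or.inr ⟨m', Walk.cons e₁ u', v', ?_, hv', lv, lhiff, Iff.rfl, hj⟩
        cases u' with
        | nil => exact trivial
        | cons f u'' =>
          rw [IntC_cons₂ e₁ (Walk.cons f u'') (by simp [length])]
          have hc : (e₁.neckRight ∧ (Walk.cons f u'').fnl) =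
              (e₁.neckRight ∧ e₂.neckLeft) := propext (and_congr Iff.rfl fnliff)
          rw [hc]
          exact ⟨h.1, hu'⟩

end Walk

end CDG

namespace CDG

variable {V : Type u} {D : CDG V}

namespace Walk

lemma support_anc (C : Set V) :
    ∀ {x b : V} (w : D.Walk x b), w.IntC (fun m c => c → m ∈ D.ancSet C) →
    (∀ v ∈ w.support, v ∈ D.ancSet (C ∪ {x, b})) ∧
    (¬ w.fnl → ∀ v ∈ w.support, v ∈ D.ancSet (C ∪ {b}))
  | x, _, .nil _, _ => by
      constructor
      · intro v hv; simp [Walk.support] at hv; subst hv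
        exact mem_ancSet_self (by simp)
      · intro hf; exact absurd trivial hf
  | x, b, .cons e (.nil _), _ => by
      constructor
      · intro v hv; simp [Walk.support] at hv
        rcases hv with rfl | rfl
        · exact mem_ancSet_self (by simp)
        · exact mem_ancSet_self (by simp)
      · intro hf
        cases e with
        | fwd h =>
          intro v hv; simp [Walk.support] at hv
          rcases hv with rfl | rfl
          · exact ⟨b, by simp, Relation.ReflTransGen.single h⟩
          · exact mem_ancSet_self (by simp)
        | bwd h => exact absurd trivial hf
        | bl h => exact absurd trivial hf
  | x, b, .cons (m := m) e₁ (.cons (m := m₂) e₂ w'), h => by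
      obtain ⟨IH1, IH2⟩ := support_anc C (Walk.cons e₂ w') h.2
      have hCxb : ∀ s ∈ C, s ∈ D.ancSet (C ∪ ({x, b} : Set V)) :=
        fun s hs => mem_ancSet_self (Or.inl hs)
      have hCb : ∀ s ∈ C, s ∈ D.ancSet (C ∪ ({b} : Set V)) :=
        fun s hs => mem_ancSet_self (Or.inl hs)
      have hm1 : m ∈ D.ancSet (C ∪ ({x, b} : Set V)) := by
        by_cases hc : e₁.neckRight ∧ e₂.neckLeft
        · exact ancSet_le hCxb m (h.1 hc)
        · cases e₁ with
          | bwd h1 => exact ⟨x, by simp, Relation.ReflTransGen.single h1⟩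
          | fwd h1 =>
            have hnl : ¬ (Walk.cons e₂ w').fnl := fun hl => hc ⟨trivial, hl⟩
            refine ancSet_le ?_ m (IH2 hnl m (start_mem_support _))
            intro s hs
            rcases hs with hs | hs
            · exact hCxb s hs
            · simp at hs; subst hs; exact mem_ancSet_self (by simp)
          | bl h1 =>
            have hnl : ¬ (Walk.cons e₂ w').fnl := fun hl => hc ⟨trivial, hl⟩
            refine ancSet_le ?_ m (IH2 hnl m (start_mem_support _))
            intro s hs
            rcases hs with hs | hs
            · exact hCxb s hs
            · simp at hs; subst hs; exact mem_ancSet_self (by simp)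
      constructor
      · intro v hv
        rcases List.mem_cons.mp hv with rfl | hv
        · exact mem_ancSet_self (by simp)
        · refine ancSet_le ?_ v (IH1 v hv)
          intro s hs
          rcases hs with hs | hs
          · exact hCxb s hs
          · simp at hs
            rcases hs with rfl | rfl
            · exact hm1
            · exact mem_ancSet_self (by simp)
      · intro hf
        cases e₁ with
        | bwd h1 => exact absurd trivial hf
        | bl h1 => exact absurd trivial hf
        | fwd h1 =>
          have hm2 : m ∈ D.ancSet (C ∪ ({b} : Set V)) := by
            by_cases hc : e₂.neckLeft
            · refine ancSet_le hCb m (h.1 ⟨trivial, hc⟩)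
            · exact IH2 hc m (start_mem_support _)
          have hrest : ∀ v ∈ (Walk.cons e₂ w').support, v ∈ D.ancSet (C ∪ ({b} : Set V)) := by
            by_cases hc : e₂.neckLeft
            · intro v hv
              refine ancSet_le ?_ v (IH1 v hv)
              intro s hs
              rcases hs with hs | hs
              · exact hCb s hs
              · simp at hs
                rcases hs with rfl | rfl
                · exact hm2
                · exact mem_ancSet_self (by simp)
            · exact IH2 hc
          intro v hv
          rcases List.mem_cons.mp hv with rfl | hv
          · exact ancSet_trans (Relation.ReflTransGen.single h1) hm2
          · exact hrest v hv

lemma length_eq_one_of_allCol : ∀ {x b : V} (w : D.Walk x b),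
    w.IntC (fun _ c => c) → w.lastHead → w.length = 1
  | _, _, .nil _, _, hlh => hlh.elim
  | _, _, .cons _ (.nil _), _, _ => rfl
  | _, _, .cons e₁ (.cons e₂ w'), h, hlh => by
      have hlen := length_eq_one_of_allCol (Walk.cons e₂ w') h.2 hlh
      cases w' with
      | nil =>
        cases e₂ with
        | fwd h2 => exact h.1.2.elim
        | bwd h2 => exact hlh.elim
        | bl h2 => exact hlh.elim
      | cons e₃ w'' => simp [Walk.length] at hlen

lemma pathWalk {C : Set V} (hloop : ∀ a, D.dir a a) (P : V → Prop → Prop)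
    (Hp : ∀ x, x ∉ C → ∀ q : Prop, ¬ q → P x q) {b : V} :
    ∀ {m : V}, D.anc m b → m ∉ D.ancSet C →
      ∀ {x : V} (u : D.Walk x m), u.IntC P →
      ∃ w : D.Walk x b, w.IntC P ∧ w.lastHead := by
  intro m hmb
  induction hmb using Relation.ReflTransGen.head_induction_on with
  | refl =>
    intro hm x u hu
    refine ⟨u.appendOne (Edge.fwd (hloop b)), ?_, (lastHead_appendOne u _).2 trivial⟩
    exact IntC_appendOne u _ hu
      (fun q hq => Hp b (fun hbC => hm (mem_ancSet_self hbC)) q (fun h => hq h))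
  | head h' htail ih =>
    intro hm x u hu
    have hc := fun hcin => hm (ancSet_trans (Relation.ReflTransGen.single h') hcin)
    refine ih hc (u.appendOne (Edge.fwd h')) ?_
    exact IntC_appendOne u _ hu
      (fun q hq => Hp _ (fun hC => hm (mem_ancSet_self hC)) q (fun h => hq h))

lemma revPathWalk {C : Set V} (P : V → Prop → Prop)
    (Hp : ∀ x, x ∉ C → ∀ q : Prop, ¬ q → P x q) {a0 : V} :
    ∀ {m : V}, D.anc m a0 → m ∉ D.ancSet C →
      ∀ {b : V} (v : D.Walk m b), v.IntC P → 1 ≤ v.length →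
      ∃ w : D.Walk a0 b, w.IntC P ∧ 1 ≤ w.length ∧ (w.lastHead ↔ v.lastHead) := by
  intro m hma
  induction hma using Relation.ReflTransGen.head_induction_on with
  | refl => intro hm b v hv hlen; exact ⟨v, hv, hlen, Iff.rfl⟩
  | head h' htail ih =>
    intro hm b v hv hlen
    have hc := fun hcin => hm (ancSet_trans (Relation.ReflTransGen.single h') hcin)
    have hv' : (Walk.cons (Edge.bwd h') v).IntC P := by
      rw [IntC_cons₂ _ v hlen]
      exact ⟨Hp _ (fun hmc => hm (mem_ancSet_self hmc)) _ (fun hq => hq.1), hv⟩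
    obtain ⟨w, hw, hwl, hiff⟩ := ih hc (Walk.cons (Edge.bwd h') v) hv' (by simp [Walk.length])
    exact ⟨w, hw, hwl, hiff.trans (lastHead_cons _ v hlen)⟩

end Walk

end CDG

namespace CDG

variable {V : Type u} {D : CDG V}

open Walk

/-- Lemma M: a walk whose colliders are ancestors of `C ∪ {a,b}` and whose
noncolliders avoid `C`, ending with a head, yields a μ-connection. -/
lemma lemmaM (hloop : ∀ a, D.dir a a) {C : Set V} {a b : V} (haC : a ∉ C)
    (w : D.Walk a b)
    (hw : w.IntC (fun m c => (c → m ∈ D.ancSet (C ∪ {a, b})) ∧ (¬ c → m ∉ C)))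
    (hlh : w.lastHead) : D.muConn C a b := by
  classical
  set PM' : V → Prop → Prop :=
    fun m c => (c → m ∈ D.ancSet C ∨ D.anc m b) ∧ (¬ c → m ∉ C) with hPM'
  have Hp' : ∀ x, x ∉ C → ∀ q : Prop, ¬ q → PM' x q :=
    fun x hx q hq => ⟨fun hc => absurd hc hq, fun _ => hx⟩
  have HpPm : ∀ x, x ∉ C → ∀ q : Prop,
      ¬ q → ((q → x ∈ D.ancSet C) ∧ (¬ q → x ∉ C)) :=
    fun x hx q hq => ⟨fun hc => absurd hc hq, fun _ => hx⟩
  have hder : ∀ m c, ((c → m ∈ D.ancSet (C ∪ {a, b})) ∧ (¬ c → m ∉ C)) ∧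
      ¬ (c ∧ D.anc m a ∧ m ∉ D.ancSet C) → PM' m c := by
    rintro m c ⟨⟨h1, h2⟩, hnb⟩
    refine ⟨fun hc => ?_, h2⟩
    obtain ⟨t, ht, hanc⟩ := h1 hc
    rcases ht with ht | ht
    · exact Or.inl ⟨t, ht, hanc⟩
    · simp at ht
      rcases ht with rfl | rfl
      · by_cases hm : m ∈ D.ancSet C
        · exact Or.inl hm
        · exact absurd ⟨hc, hanc, hm⟩ hnb
      · exact Or.inr hanc
  -- Phase A: remove colliders that are only ancestors of `a`.
  have step1 : ∃ w1 : D.Walk a b, w1.IntC PM' ∧ w1.lastHead := by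
    rcases splitLast _ (fun m c => c ∧ D.anc m a ∧ m ∉ D.ancSet C) w hw with
      hclean | ⟨m, u, v, hu, hv, lv, lhiff, _, ⟨c, hPc, hc, hanc, hm⟩⟩
    · exact ⟨w, IntC_mono hder w hclean, hlh⟩
    · obtain ⟨w1, hw1, _, hiff⟩ :=
        revPathWalk PM' Hp' hanc hm v (IntC_mono hder v hv) lv
      exact ⟨w1, hw1, hiff.mpr (lhiff.mpr hlh)⟩
  obtain ⟨w1, hw1, hlh1⟩ := step1
  -- Phase B: remove colliders that are only ancestors of `b`.
  have hder2 : ∀ m c, (PM' m c ∧ ¬ (c ∧ D.anc m b ∧ m ∉ D.ancSet C)) →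
      ((c → m ∈ D.ancSet C) ∧ (¬ c → m ∉ C)) := by
    rintro m c ⟨⟨h1, h2⟩, hnb⟩
    refine ⟨fun hc => ?_, h2⟩
    rcases h1 hc with h | h
    · exact h
    · by_cases hm : m ∈ D.ancSet C
      · exact hm
      · exact absurd ⟨hc, h, hm⟩ hnb
  rcases splitFirst _ (fun m c => c ∧ D.anc m b ∧ m ∉ D.ancSet C) w1 hw1 with
    hclean | ⟨m, u, v, hu, hv, lu, lv, lsum, lhiff, _, ⟨c, hPc, hc, hanc, hm⟩⟩
  · exact ⟨haC, w1, (mOpen_iff_IntC w1).mpr (IntC_mono hder2 w1 hclean), hlh1⟩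
  · obtain ⟨w2, hw2, hlh2⟩ := pathWalk hloop _ HpPm hanc hm u (IntC_mono hder2 u hu)
    exact ⟨haC, w2, (mOpen_iff_IntC w2).mpr hw2, hlh2⟩

namespace Walk

lemma extractCol {α β : V} (hne : α ≠ β) {A : Set V} :
    ∀ (n : ℕ) (w : D.Walk α β), w.length ≤ n →
      w.IntC (fun m c => (¬ c → m = α ∨ m = β) ∧ m ∈ A) →
      ∃ w' : D.Walk α β, 1 ≤ w'.length ∧ w'.IntC (fun m c => c ∧ m ∈ A) := by
  classical
  intro n
  induction n with
  | zero =>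
    intro w hlen _
    exact absurd (length_pos_of_ne w hne) (by omega)
  | succ n ih =>
    intro w hlen hw
    rcases splitFirst _ (fun _ c => ¬ c) w hw with
      hclean | ⟨m, u, v, hu, hv, lu, lv, lsum, _, _, ⟨c, hPc, hBad⟩⟩
    · exact ⟨w, length_pos_of_ne w hne,
        IntC_mono (fun m c h => ⟨not_not.mp h.2, h.1.2⟩) w hclean⟩
    · rcases hPc.1 hBad with rfl | rfl
      · exact ih v (by omega) hv
      · exact ⟨u, lu, IntC_mono (fun m c h => ⟨not_not.mp h.2, h.1.2⟩) u hu⟩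

lemma extractNoEnd {α β : V} (hne : α ≠ β) {A : Set V} :
    ∀ (n : ℕ) (w : D.Walk α β), w.length ≤ n → w.IntC (fun m c => c ∧ m ∈ A) →
      ∃ w' : D.Walk α β, 1 ≤ w'.length ∧
        w'.IntC (fun m c => (c ∧ m ∈ A) ∧ ¬ (m = α ∨ m = β)) := by
  classical
  intro n
  induction n with
  | zero =>
    intro w hlen _
    exact absurd (length_pos_of_ne w hne) (by omega)
  | succ n ih =>
    intro w hlen hw
    rcases splitFirst _ (fun m _ => m = α ∨ m = β) w hw with
      hclean | ⟨m, u, v, hu, hv, lu, lv, lsum, _, _, ⟨c, hPc, hBad⟩⟩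
    · exact ⟨w, length_pos_of_ne w hne, hclean⟩
    · rcases hBad with rfl | rfl
      · exact ih v (by omega) hv
      · exact ⟨u, lu, hu⟩

end Walk

end CDG

/- ============ induced subgraph walks (Type 0) ============ -/

namespace CDG

variable {V : Type} {D : CDG V} {A : Set V}

def Edge.induceE : ∀ {a b : V}, D.Edge a b → a ∈ A → b ∈ A → (D.induce A).Edge a b
  | _, _, .fwd h, ha, hb => .fwd ⟨h, ha, hb⟩
  | _, _, .bwd h, ha, hb => .bwd ⟨h, hb, ha⟩
  | _, _, .bl h, ha, hb => .bl ⟨h, ha, hb⟩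

lemma Edge.induceE_neckRight {a b : V} (e : D.Edge a b) (ha : a ∈ A) (hb : b ∈ A) :
    (e.induceE ha hb).neckRight ↔ e.neckRight := by cases e <;> exact Iff.rfl

lemma Edge.induceE_neckLeft {a b : V} (e : D.Edge a b) (ha : a ∈ A) (hb : b ∈ A) :
    (e.induceE ha hb).neckLeft ↔ e.neckLeft := by cases e <;> exact Iff.rfl

def Edge.projE : ∀ {a b : V}, (D.induce A).Edge a b → D.Edge a b
  | _, _, .fwd h => .fwd h.1
  | _, _, .bwd h => .bwd h.1
  | _, _, .bl h => .bl h.1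

lemma Edge.projE_neckRight {a b : V} (e : (D.induce A).Edge a b) :
    e.projE.neckRight ↔ e.neckRight := by cases e <;> exact Iff.rfl

lemma Edge.projE_neckLeft {a b : V} (e : (D.induce A).Edge a b) :
    e.projE.neckLeft ↔ e.neckLeft := by cases e <;> exact Iff.rfl

namespace Walk

def induceW : ∀ {a b : V} (w : D.Walk a b), (∀ v ∈ w.support, v ∈ A) → (D.induce A).Walk a b
  | _, _, .nil a, _ => .nil a
  | _, _, .cons (m := m) e w, h =>
      .cons (e.induceE (h _ (start_mem_support _))
          (h m (List.mem_cons_of_mem _ (start_mem_support w))))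
        (induceW w (fun v hv => h v (List.mem_cons_of_mem _ hv)))

lemma length_induceW : ∀ {a b : V} (w : D.Walk a b) (h : ∀ v ∈ w.support, v ∈ A),
    (induceW w h).length = w.length
  | _, _, .nil _, _ => rfl
  | _, _, .cons e w, h => by
      simp [induceW, Walk.length, length_induceW w]

lemma allCol_induceW : ∀ {a b : V} (w : D.Walk a b) (h : ∀ v ∈ w.support, v ∈ A),
    w.allColliders → (induceW w h).allColliders
  | _, _, .nil _, _, _ => trivial
  | _, _, .cons _ (.nil _), _, _ => trivial
  | _, _, .cons e₁ (.cons e₂ w'), h, hcol =>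
      ⟨(Edge.induceE_neckRight e₁ _ _).mpr hcol.1,
       (Edge.induceE_neckLeft e₂ _ _).mpr hcol.2.1,
       allCol_induceW (Walk.cons e₂ w') (fun v hv => h v (List.mem_cons_of_mem _ hv)) hcol.2.2⟩

def projW : ∀ {a b : V}, (D.induce A).Walk a b → D.Walk a b
  | _, _, .nil a => .nil a
  | _, _, .cons e w => .cons e.projE (projW w)

lemma support_projW : ∀ {a b : V} (w : (D.induce A).Walk a b),
    (projW w).support = w.support
  | _, _, .nil _ => rfl
  | _, _, .cons e w => by simp [projW, Walk.support, support_projW w]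

lemma support_mem_induced : ∀ {a b : V} (w : (D.induce A).Walk a b),
    a ∈ A → ∀ v ∈ w.support, v ∈ A
  | _, _, .nil _, ha => by
      intro v hv; simp [Walk.support] at hv; exact hv ▸ ha
  | _, _, .cons (m := m) e w, ha => by
      intro v hv
      rcases List.mem_cons.mp hv with rfl | hv
      · exact ha
      · have hm : m ∈ A := by
          cases e with
          | fwd h => exact h.2.2
          | bwd h => exact h.2.1
          | bl h => exact h.2.2
        exact support_mem_induced w hm v hv

lemma allCol_projW : ∀ {a b : V} (w : (D.induce A).Walk a b),
    w.allColliders → (projW w).allColliders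
  | _, _, .nil _, _ => trivial
  | _, _, .cons _ (.nil _), _ => trivial
  | _, _, .cons e₁ (.cons e₂ w'), hcol =>
      ⟨(Edge.projE_neckRight e₁).mpr hcol.1,
       (Edge.projE_neckLeft e₂).mpr hcol.2.1,
       allCol_projW (Walk.cons e₂ w') hcol.2.2⟩

end Walk

end CDG

namespace CDG

open Walk

lemma anc_congr {V : Type u} {D₁ D₂ : CDG V} (hdir : D₁.dir = D₂.dir) :
    D₁.anc = D₂.anc := by
  unfold anc; rw [hdir]

lemma ancSet_congr {V : Type u} {D₁ D₂ : CDG V} (hdir : D₁.dir = D₂.dir) :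
    D₁.ancSet = D₂.ancSet := by
  unfold ancSet; rw [anc_congr hdir]

lemma isAncestral_congr {V : Type} {D₁ D₂ : CDG V} (hdir : D₁.dir = D₂.dir) {A : Set V}
    (h : D₁.IsAncestral A) : D₂.IsAncestral A := by
  intro v hv
  exact h (by rw [ancSet_congr hdir]; exact hv)

/-- Transfer a μ-open walk with a final head from `D₁` to `D₂` by replacing
maximal collider segments via the collider-connection hypothesis. -/
lemma SEG {V : Type} {D₁ D₂ : CDG V} (hdir : D₁.dir = D₂.dir) {A C : Set V}
    (Hcc : ∀ α ∈ A, ∀ β ∈ A,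
      (D₁.induce A).colliderConn α β → (D₂.induce A).colliderConn α β) :
    ∀ (n : ℕ) {x b : V} (w : D₁.Walk x b), w.length ≤ n → x ∈ A → b ∈ A →
      w.IntC (fun m c => (¬ c → m ∉ C) ∧ m ∈ A) → w.lastHead →
      ∃ w₂ : D₂.Walk x b,
        w₂.IntC (fun m c => (c → m ∈ A) ∧ (¬ c → m ∉ C)) ∧ w₂.lastHead := by
  classical
  intro n
  induction n with
  | zero =>
    intro x b w hlen _ _ _ hlh
    exact absurd (length_pos_of_lastHead w hlh) (by omega)
  | succ n ih =>
    intro x b w hlen hx hb hw hlh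
    rcases splitFirst _ (fun _ c => ¬ c) w hw with
      hclean | ⟨m, u, v, hu, hv, lu, lv, lsum, lhiff, _, ⟨c, hPc, hBad⟩⟩
    · -- no internal noncollider: w is a single directed edge
      have hcol : w.IntC (fun _ c => c) :=
        IntC_mono (fun _ _ h => not_not.mp h.2) w hclean
      have hlen1 := length_eq_one_of_allCol w hcol hlh
      cases w with
      | nil => simp [Walk.length] at hlen1
      | cons e w' =>
        cases w' with
        | cons f w'' => simp [Walk.length] at hlen1
        | nil =>
          cases e with
          | fwd hd =>
            have hd2 := hdir ▸ hd
            exact ⟨Walk.cons (Edge.fwd hd2) (Walk.nil _), trivial, trivial⟩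
          | bwd hd => exact hlh.elim
          | bl hd => exact hlh.elim
    · have hmC : m ∉ C := hPc.1 hBad
      have hmA : m ∈ A := hPc.2
      have hucol : u.allColliders := (allColliders_iff_IntC u).mpr
        (IntC_mono (fun _ _ h => not_not.mp h.2) u hu)
      have husup : ∀ v' ∈ u.support, v' ∈ A :=
        support_of_IntC u hx hmA (IntC_mono (fun _ _ h => h.1.2) u hu)
      have hccw : (D₁.induce A).colliderConn x m :=
        ⟨induceW u husup, by rw [length_induceW]; omega, allCol_induceW u husup hucol⟩
      obtain ⟨ρ', hρl, hρcol⟩ := Hcc x hx m hmA hccw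
      have hρsup : ∀ v' ∈ (projW ρ').support, v' ∈ A := by
        rw [support_projW]; exact support_mem_induced ρ' hx
      have hρInt : (projW ρ').IntC (fun m c => (c → m ∈ A) ∧ (¬ c → m ∉ C)) := by
        refine IntC_mono ?_ _ (IntC_and _ ((allColliders_iff_IntC _).mp (allCol_projW ρ' hρcol))
          (IntC_of_support _ hρsup))
        rintro m' c' ⟨hc', hm'⟩
        exact ⟨fun _ => hm', fun hnc => absurd hc' hnc⟩
      obtain ⟨v₂, hv₂, hv₂lh⟩ := ih v (by omega) hmA hb hv (lhiff.mpr hlh)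
      refine ⟨(projW ρ').append v₂,
        IntC_append _ v₂ hρInt hv₂ (fun c' => ⟨fun _ => hmA, fun _ => hmC⟩), ?_⟩
      rw [lastHead_append _ v₂ (length_pos_of_lastHead v₂ hv₂lh)]
      exact hv₂lh

lemma transfer {V : Type} {D₁ D₂ : CDG V} (h2 : ∀ a, D₂.dir a a) (hdir : D₁.dir = D₂.dir)
    (Hcc : ∀ A : Set V, D₁.IsAncestral A → ∀ α ∈ A, ∀ β ∈ A,
      (D₁.induce A).colliderConn α β → (D₂.induce A).colliderConn α β)
    {C : Set V} {a b : V} : D₁.muConn C a b → D₂.muConn C a b := by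
  rintro ⟨haC, w, hop, hlh⟩
  set A := D₁.ancSet (C ∪ {a, b}) with hA
  have hanc : D₁.IsAncestral A := fun v hv => ancSet_ancSet v hv
  have haA : a ∈ A := mem_ancSet_self (by simp)
  have hbA : b ∈ A := mem_ancSet_self (by simp)
  have hPm := (mOpen_iff_IntC w).mp hop
  have hsup := (support_anc C w (IntC_mono (fun m c h => h.1) w hPm)).1
  have hIntA : w.IntC (fun m _ => m ∈ A) := IntC_of_support w hsup
  have hIn : w.IntC (fun m c => (¬ c → m ∉ C) ∧ m ∈ A) :=
    IntC_mono (fun m c h => ⟨h.1.2, h.2⟩) w (IntC_and w hPm hIntA)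
  obtain ⟨w₂, hw₂, hw₂lh⟩ := SEG hdir (Hcc A hanc) w.length w le_rfl haA hbA hIn hlh
  have hA2 : A = D₂.ancSet (C ∪ {a, b}) := by rw [hA, ancSet_congr hdir]
  exact lemmaM h2 haC w₂
    (IntC_mono (fun m c h => ⟨fun hc => hA2 ▸ h.1 hc, h.2⟩) w₂ hw₂) hw₂lh

lemma muConn_of_colliderConn {V : Type} {D : CDG V} (hloop : ∀ a, D.dir a a) {A : Set V}
    {α β : V} (hα : α ∈ A) (hβ : β ∈ A) (hne : α ≠ β) :
    (D.induce A).colliderConn α β → D.muConn (A \ {α, β}) α β := by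
  rintro ⟨ρ', hρl, hρcol⟩
  have hαC : α ∉ A \ ({α, β} : Set V) := fun h => h.2 (by simp)
  have hβC : β ∉ A \ ({α, β} : Set V) := fun h => h.2 (by simp)
  have hsup : ∀ v ∈ (projW ρ').support, v ∈ A := by
    rw [support_projW]; exact support_mem_induced ρ' hα
  have hInt : (projW ρ').IntC (fun m c => c ∧ m ∈ A) :=
    IntC_and _ ((allColliders_iff_IntC _).mp (allCol_projW ρ' hρcol))
      (IntC_of_support _ hsup)
  obtain ⟨w', hl', hw'⟩ := extractNoEnd hne (projW ρ').length (projW ρ') le_rfl hInt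
  have hPm : w'.IntC (fun m c =>
      (c → m ∈ D.ancSet (A \ {α, β})) ∧ (¬ c → m ∉ A \ {α, β})) := by
    refine IntC_mono ?_ w' hw'
    rintro m c ⟨⟨hc, hmA⟩, hnend⟩
    refine ⟨fun _ => mem_ancSet_self ⟨hmA, fun hmem => hnend (by simpa using hmem)⟩,
      fun hnc => absurd hc hnc⟩
  refine ⟨hαC, w'.appendOne (Edge.fwd (hloop β)), ?_,
    (lastHead_appendOne w' _).2 trivial⟩
  rw [mOpen_iff_IntC]
  exact IntC_appendOne w' _ hPm
    (fun q hq => ⟨fun hqq => (hq hqq).elim, fun _ => hβC⟩)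

lemma colliderConn_of_muConn {V : Type} {D : CDG V} {A : Set V}
    (hanc : ∀ v ∈ D.ancSet A, v ∈ A) {α β : V} (hα : α ∈ A) (hβ : β ∈ A) (hne : α ≠ β) :
    D.muConn (A \ {α, β}) α β → (D.induce A).colliderConn α β := by
  rintro ⟨hαC, w, hop, hlh⟩
  have hPm := (mOpen_iff_IntC w).mp hop
  have hsup0 := (support_anc (A \ {α, β}) w (IntC_mono (fun m c h => h.1) w hPm)).1
  have hsub : ∀ s ∈ (A \ {α, β}) ∪ ({α, β} : Set V), s ∈ D.ancSet A := by
    intro s hs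
    rcases hs with hs | hs
    · exact mem_ancSet_self hs.1
    · simp at hs
      rcases hs with rfl | rfl
      · exact mem_ancSet_self hα
      · exact mem_ancSet_self hβ
  have hsup : ∀ v ∈ w.support, v ∈ A :=
    fun v hv => hanc _ (ancSet_le hsub v (hsup0 v hv))
  have hIn : w.IntC (fun m c => (¬ c → m = α ∨ m = β) ∧ m ∈ A) := by
    refine IntC_mono ?_ w (IntC_and w hPm (IntC_of_support w hsup))
    rintro m c ⟨hPmc, hmA⟩
    refine ⟨fun hnc => ?_, hmA⟩
    have hmC := hPmc.2 hnc
    by_contra hcon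
    push_neg at hcon
    exact hmC ⟨hmA, by simp [hcon.1, hcon.2]⟩
  obtain ⟨w', hl', hw'⟩ := extractCol hne w.length w le_rfl hIn
  have hsup' : ∀ v ∈ w'.support, v ∈ A :=
    support_of_IntC w' hα hβ (IntC_mono (fun m c h => h.2) w' hw')
  exact ⟨induceW w' hsup', by rw [length_induceW]; omega,
    allCol_induceW w' hsup' ((allColliders_iff_IntC w').mpr
      (IntC_mono (fun m c h => h.1) w' hw'))⟩

lemma ccTransfer {V : Type} {D₁ D₂ : CDG V} (h1 : ∀ a, D₁.dir a a)
    (hdir : D₁.dir = D₂.dir)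
    (hμ : ∀ (C : Set V) (a b : V), D₁.muConn C a b → D₂.muConn C a b)
    {A : Set V} (hanc : D₁.IsAncestral A) {α β : V} (hα : α ∈ A) (hβ : β ∈ A)
    (hne : α ≠ β) :
    (D₁.induce A).colliderConn α β → (D₂.induce A).colliderConn α β := by
  intro hcc
  have hanc2 : ∀ v ∈ D₂.ancSet A, v ∈ A := fun v hv =>
    hanc (by rw [ancSet_congr hdir]; exact hv)
  exact colliderConn_of_muConn hanc2 hα hβ hne
    (hμ _ _ _ (muConn_of_colliderConn h1 hα hβ hne hcc))

lemma muConn_iff_of_indep {V : Type} {D₁ D₂ : CDG V} (h : D₁.indep = D₂.indep)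
    (C : Set V) (a b : V) : D₁.muConn C a b ↔ D₂.muConn C a b := by
  have h0 := Set.ext_iff.mp h ({a}, {b}, C)
  simp only [indep, Set.mem_setOf_eq, muSep, Set.mem_singleton_iff, forall_eq] at h0
  exact not_iff_not.mp h0

end CDG
/-- cDGs with the same directed part are Markov equivalent iff
for every ancestral set A the induced subgraphs have the same collider
connections. -/
theorem stmt9 {V : Type} (D₁ D₂ : CDG V)
    (h1 : ∀ a, D₁.dir a a) (h2 : ∀ a, D₂.dir a a) (hdir : D₁.dir = D₂.dir) :
    D₁.indep = D₂.indep ↔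
      ∀ A : Set V, D₁.IsAncestral A → ∀ α ∈ A, ∀ β ∈ A,
        ((D₁.induce A).colliderConn α β ↔ (D₂.induce A).colliderConn α β) := by
  constructor
  · intro h A hanc α hα β hβ
    by_cases hne : α = β
    · subst hne
      constructor <;> intro _
      · exact ⟨CDG.Walk.cons (CDG.Edge.fwd ⟨h2 α, hα, hα⟩) (CDG.Walk.nil α),
          Nat.one_pos, trivial⟩
      · exact ⟨CDG.Walk.cons (CDG.Edge.fwd ⟨h1 α, hα, hα⟩) (CDG.Walk.nil α),
          Nat.one_pos, trivial⟩
    · constructor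
      · exact CDG.ccTransfer h1 hdir
          (fun C a b => (CDG.muConn_iff_of_indep h C a b).mp) hanc hα hβ hne
      · exact CDG.ccTransfer h2 hdir.symm
          (fun C a b => (CDG.muConn_iff_of_indep h C a b).mpr)
          (CDG.isAncestral_congr hdir hanc) hα hβ hne
  · intro hcc
    have key : ∀ (C : Set V) (a b : V), D₁.muConn C a b ↔ D₂.muConn C a b := by
      intro C a b
      constructor
      · exact CDG.transfer h2 hdir (fun A ha α hα β hβ => (hcc A ha α hα β hβ).mp)
      · exact CDG.transfer h1 hdir.symm
          (fun A ha α hα β hβ =>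
            (hcc A (CDG.isAncestral_congr hdir.symm ha) α hα β hβ).mpr)
    ext ⟨X, Y, C⟩
    simp only [CDG.indep, Set.mem_setOf_eq, CDG.muSep]
    constructor <;> intro h' a ha b hb hm
    · exact h' a ha b hb ((key C a b).mpr hm)
    · exact h' a ha b hb ((key C a b).mp hm)
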